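/- arXiv:2402.12640 — 3 statements merged into one kernel-verified Lean document; each statement's English description precedes it below -/
import Mathlib

section
/- Let n ≥ 3 and identify ℝⁿ with ℝ × ℝ^(n−1), writing vectors as (z₀, z′) with z₀ ∈ ℝ and z′ ∈ ℝ^(n−1). Let ξ ∈ ℝ and η ∈ ℝ^(n−1) with (ξ, η) ≠ (0, 0), and let ε > 0. Let f be a real symmetric n × n matrix. Suppose that for every unit vector Y ∈ ℝ^(n−1) and every s ∈ ℝ with |s| < ε and s·ξ + ⟨Y, η⟩ = 0, one has P f Pᵀ = 0, where P = Idₙ − w vᵀ with w = (s, Y) ∈ ℝⁿ and v = (0, Y) ∈ ℝⁿ. Then f = 0. -/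
/-!
Since `uᵀ (1 - w vᵀ) = uᵀ` whenever `u ⬝ w = 0`, the hypothesis says that `f`, as a bilinear
form, vanishes on the hyperplane `wᗮ` of every admissible direction `w = (s, Y)`. For a unit
`Y₀ ⊥ η`, `P = (0, Y₀)` is admissible, and tilting it towards an orthogonal `Q` gives two more
admissible directions `c P ± Q`. Testing `f` on the vectors `q P ∓ c p Q` (with `p = |P|²`,
`q = |Q|²`), which lie in the tilted hyperplanes, shows `f(P, P) = f(P, Q) = 0` and
`f(P, r) = 0` for `r ⊥ P, Q`, hence `f P = 0`; together with the vanishing on `Pᗮ` this forces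
`f = 0`.
-/

open scoped RealInnerProductSpace Matrix
open Matrix

section CommRing

variable {R ι : Type*} [CommRing R] [Fintype ι]

def VanishesOnOrthogonal (f : Matrix ι ι R) (w : ι → R) : Prop :=
  ∀ u u' : ι → R, u ⬝ᵥ w = 0 → u' ⬝ᵥ w = 0 → u ⬝ᵥ f *ᵥ u' = 0

theorem vecMul_one_sub_vecMulVec_of_dotProduct_eq_zero [DecidableEq ι] {u w : ι → R} (v : ι → R)
    (hu : u ⬝ᵥ w = 0) : u ᵥ* (1 - vecMulVec w v) = u := by
  rw [vecMul_sub, vecMul_one, vecMul_vecMulVec, hu, zero_smul, sub_zero]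

theorem vanishesOnOrthogonal_of_mul_mul_transpose_eq_zero [DecidableEq ι] {f : Matrix ι ι R}
    {w v : ι → R} (h : (1 - vecMulVec w v) * f * (1 - vecMulVec w v)ᵀ = 0) :
    VanishesOnOrthogonal f w := by
  intro u u' hu hu'
  calc u ⬝ᵥ f *ᵥ u'
      = u ⬝ᵥ ((1 - vecMulVec w v) * f * (1 - vecMulVec w v)ᵀ) *ᵥ u' := by
        rw [← mulVec_mulVec, mulVec_transpose,
          vecMul_one_sub_vecMulVec_of_dotProduct_eq_zero v hu', ← mulVec_mulVec,
          dotProduct_mulVec u (1 - vecMulVec w v),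
          vecMul_one_sub_vecMulVec_of_dotProduct_eq_zero v hu]
    _ = 0 := by rw [h, zero_mulVec, dotProduct_zero]

theorem Matrix.IsSymm.dotProduct_mulVec_comm {f : Matrix ι ι R} (hf : f.IsSymm) (x y : ι → R) :
    x ⬝ᵥ f *ᵥ y = y ⬝ᵥ f *ᵥ x := by
  rw [dotProduct_mulVec, ← mulVec_transpose, hf.eq, dotProduct_comm]

theorem eq_zero_of_forall_dotProduct_mulVec_eq_zero {f : Matrix ι ι R}
    (h : ∀ x y, x ⬝ᵥ f *ᵥ y = 0) : f = 0 := by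
  classical
  ext i j
  simpa using h (Pi.single i 1) (Pi.single j 1)

end CommRing

section Field

variable {K ι : Type*} [Field K] [Fintype ι] {f : Matrix ι ι K} {P Q : ι → K}

theorem exists_eq_smul_add_of_dotProduct_eq_zero (hP : P ⬝ᵥ P ≠ 0) (x : ι → K) :
    ∃ (a : K) (r : ι → K), r ⬝ᵥ P = 0 ∧ x = a • P + r :=
  ⟨x ⬝ᵥ P / P ⬝ᵥ P, x - (x ⬝ᵥ P / P ⬝ᵥ P) • P, by
    rw [sub_dotProduct, smul_dotProduct, smul_eq_mul, div_mul_cancel₀ _ hP, sub_self],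
    (add_sub_cancel _ _).symm⟩

theorem eq_zero_of_dotProduct_eq_zero_of_orthogonal {z : ι → K} (hPQ : P ⬝ᵥ Q = 0)
    (hP : P ⬝ᵥ P ≠ 0) (hQ : Q ⬝ᵥ Q ≠ 0) (hzP : z ⬝ᵥ P = 0) (hzQ : z ⬝ᵥ Q = 0)
    (hz : ∀ r, r ⬝ᵥ P = 0 → r ⬝ᵥ Q = 0 → z ⬝ᵥ r = 0) : z = 0 := by
  refine dotProduct_eq_zero _ fun y => ?_
  obtain ⟨a, x, hx, rfl⟩ := exists_eq_smul_add_of_dotProduct_eq_zero hP y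
  obtain ⟨b, r, hr, rfl⟩ := exists_eq_smul_add_of_dotProduct_eq_zero hQ x
  have hrP : r ⬝ᵥ P = 0 := by
    rwa [add_dotProduct, smul_dotProduct, dotProduct_comm Q, hPQ, smul_zero, zero_add] at hx
  simp [hzP, hzQ, hz r hrP hr]

theorem eq_zero_of_vanishesOnOrthogonal_of_mulVec_eq_zero (hf : f.IsSymm) (hP : P ⬝ᵥ P ≠ 0)
    (h : VanishesOnOrthogonal f P) (hfP : f *ᵥ P = 0) : f = 0 := by
  refine eq_zero_of_forall_dotProduct_mulVec_eq_zero fun x y => ?_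
  obtain ⟨a, r, hr, rfl⟩ := exists_eq_smul_add_of_dotProduct_eq_zero hP x
  obtain ⟨b, s, hs, rfl⟩ := exists_eq_smul_add_of_dotProduct_eq_zero hP y
  simp only [mulVec_add, mulVec_smul, hfP, add_dotProduct, dotProduct_add, smul_dotProduct,
    hf.dotProduct_mulVec_comm P s, h r s hr hs, dotProduct_zero, smul_zero, add_zero]

theorem mulVec_eq_zero_of_vanishesOnOrthogonal_frame [NeZero (2 : K)] {c : K}
    (hf : f.IsSymm) (hPQ : P ⬝ᵥ Q = 0) (hP : P ⬝ᵥ P ≠ 0) (hQ : Q ⬝ᵥ Q ≠ 0) (hc : c ≠ 0)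
    (h₁ : VanishesOnOrthogonal f P) (h₂ : VanishesOnOrthogonal f (c • P + Q))
    (h₃ : VanishesOnOrthogonal f (c • P - Q)) :
    f *ᵥ P = 0 := by
  set p := P ⬝ᵥ P
  set q := Q ⬝ᵥ Q
  have hQP : Q ⬝ᵥ P = 0 := by rwa [dotProduct_comm]
  have hu₂ : (q • P - (c * p) • Q) ⬝ᵥ (c • P + Q) = 0 := by
    simp only [sub_dotProduct, dotProduct_add, smul_dotProduct, dotProduct_smul, hPQ, hQP,
      smul_eq_mul]
    ring
  have hu₃ : (q • P + (c * p) • Q) ⬝ᵥ (c • P - Q) = 0 := by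
    simp only [add_dotProduct, dotProduct_sub, smul_dotProduct, dotProduct_smul, hPQ, hQP,
      smul_eq_mul]
    ring
  have e₂ := h₂ _ _ hu₂ hu₂
  have e₃ := h₃ _ _ hu₃ hu₃
  simp only [mulVec_add, mulVec_sub, mulVec_smul, add_dotProduct, sub_dotProduct, dotProduct_add,
    dotProduct_sub, smul_dotProduct, dotProduct_smul, smul_eq_mul, h₁ Q Q hQP hQP,
    hf.dotProduct_mulVec_comm Q P] at e₂ e₃
  have h2 : (2 : K) ≠ 0 := two_ne_zero
  refine eq_zero_of_dotProduct_eq_zero_of_orthogonal hPQ hP hQ ?_ ?_ fun r hrP hrQ => ?_ <;>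
    rw [dotProduct_comm, hf.dotProduct_mulVec_comm]
  · have : (2 * q ^ 2) * (P ⬝ᵥ f *ᵥ P) = 0 := by linear_combination e₂ + e₃
    simpa [h2, hQ] using this
  · have : (2 * 2 * q * c * p) * (P ⬝ᵥ f *ᵥ Q) = 0 := by linear_combination e₃ - e₂
    simpa [h2, hQ, hc, hP] using this
  · have hr₂ : r ⬝ᵥ (c • P + Q) = 0 := by simp [dotProduct_add, hrP, hrQ]
    have := h₂ _ _ hu₂ hr₂
    simp only [sub_dotProduct, smul_dotProduct, smul_eq_mul, h₁ Q r hQP hrP] at this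
    simpa [hQ] using this

end Field

theorem exists_norm_eq_one_inner_eq_zero {E : Type*} [NormedAddCommGroup E]
    [InnerProductSpace ℝ E] [FiniteDimensional ℝ E] (hE : 2 ≤ Module.finrank ℝ E) (x : E) :
    ∃ y : E, ‖y‖ = 1 ∧ ⟪y, x⟫ = 0 := by
  have hdim := Submodule.finrank_add_finrank_orthogonal (ℝ ∙ x)
  have hx : Module.finrank ℝ (ℝ ∙ x) ≤ 1 := by
    simpa using finrank_span_le_card (R := ℝ) ({x} : Set E)
  obtain ⟨z, hz, hz0⟩ := Submodule.exists_mem_ne_zero_of_ne_bot (p := (ℝ ∙ x)ᗮ) (by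
    intro hbot
    rw [hbot, finrank_bot] at hdim
    omega)
  refine ⟨‖z‖⁻¹ • z, norm_smul_inv_norm hz0, ?_⟩
  rw [real_inner_smul_left, Submodule.mem_orthogonal_singleton_iff_inner_left.1 hz, mul_zero]

theorem norm_smul_add_smul_eq_one {E : Type*} [NormedAddCommGroup E] [InnerProductSpace ℝ E]
    {x y : E} (hx : ‖x‖ = 1) (hy : ‖y‖ = 1) (hxy : ⟪x, y⟫ = 0) {a b : ℝ}
    (hab : a ^ 2 + b ^ 2 = 1) : ‖a • x + b • y‖ = 1 := by
  have h := norm_add_sq_eq_norm_sq_add_norm_sq_real (x := a • x) (y := b • y)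
    (by rw [real_inner_smul_left, real_inner_smul_right, hxy, mul_zero, mul_zero])
  rw [norm_smul, norm_smul, hx, hy, Real.norm_eq_abs, Real.norm_eq_abs] at h
  nlinarith [norm_nonneg (a • x + b • y), sq_abs a, sq_abs b]

@[simp]
theorem EuclideanSpace.ofLp_dotProduct_ofLp {ι : Type*} [Fintype ι] (x y : EuclideanSpace ℝ ι) :
    ⇑x ⬝ᵥ ⇑y = ⟪x, y⟫ := by
  simp [EuclideanSpace.inner_eq_star_dotProduct, dotProduct_comm]

theorem exists_sq_add_sq_eq_one_abs_mul_lt {ε : ℝ} (hε : 0 < ε) (a : ℝ) :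
    ∃ c σ : ℝ, c ≠ 0 ∧ σ ≠ 0 ∧ c ^ 2 + σ ^ 2 = 1 ∧ |σ * a| < ε := by
  obtain ⟨δ, hδ, hδa⟩ := exists_pos_mul_lt hε |a|
  set σ := min δ (1 / 2)
  have hσ : 0 < σ := lt_min hδ one_half_pos
  have hσ₁ : σ ^ 2 < 1 := by nlinarith [min_le_right δ (1 / 2)]
  refine ⟨√(1 - σ ^ 2), σ, (Real.sqrt_pos.2 (by linarith)).ne', hσ.ne',
    by rw [Real.sq_sqrt (by linarith)]; ring, ?_⟩
  rw [abs_mul, abs_of_pos hσ, mul_comm]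
  exact (mul_le_mul_of_nonneg_left (min_le_left _ _) (abs_nonneg _)).trans_lt hδa

section Admissible

variable {m : ℕ}

def IsAdmissibleDirection (ε ξ : ℝ) (η : EuclideanSpace ℝ (Fin m)) (w : Fin (m + 1) → ℝ) :
    Prop :=
  ∃ (s : ℝ) (Y : EuclideanSpace ℝ (Fin m)),
    ‖Y‖ = 1 ∧ |s| < ε ∧ s * ξ + ⟪Y, η⟫ = 0 ∧ w = vecCons s ⇑Y

theorem exists_admissible_frame (hm : 2 ≤ m) {ε : ℝ} (hε : 0 < ε) (ξ : ℝ)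
    (η : EuclideanSpace ℝ (Fin m)) :
    ∃ (P Q : Fin (m + 1) → ℝ) (c : ℝ), P ⬝ᵥ Q = 0 ∧ P ⬝ᵥ P ≠ 0 ∧ Q ⬝ᵥ Q ≠ 0 ∧ c ≠ 0 ∧
      IsAdmissibleDirection ε ξ η P ∧ IsAdmissibleDirection ε ξ η (c • P + Q) ∧
      IsAdmissibleDirection ε ξ η (c • P - Q) := by
  have hdim : 2 ≤ Module.finrank ℝ (EuclideanSpace ℝ (Fin m)) := by simpa using hm
  obtain ⟨Y₀, hY₀, hY₀η⟩ := exists_norm_eq_one_inner_eq_zero hdim η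
  have hY₀0 : Y₀ ≠ 0 := ne_zero_of_norm_ne_zero (hY₀ ▸ one_ne_zero)
  have hP : IsAdmissibleDirection ε ξ η (vecCons 0 ⇑Y₀) :=
    ⟨0, Y₀, hY₀, by simpa using hε, by simp [hY₀η], rfl⟩
  rcases eq_or_ne ξ 0 with rfl | hξ
  · -- with `ξ = 0` the constraint does not see `s`, so tilt in the `s`-direction
    have hε' : |ε / 2| < ε := by rw [abs_of_pos (half_pos hε)]; exact half_lt_self hε
    refine ⟨vecCons 0 ⇑Y₀, vecCons (ε / 2) 0, 1, by simp, by simp [hY₀0], by simp [hε.ne'],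
      one_ne_zero, hP, ⟨ε / 2, Y₀, hY₀, hε', by simp [hY₀η], by simp⟩,
      ⟨-(ε / 2), Y₀, hY₀, by rwa [abs_neg], by simp [hY₀η], by simp⟩⟩
  · -- otherwise rotate `Y₀` slightly towards a unit `Y₁ ⊥ Y₀`, and let `s` absorb `⟪Y₁, η⟫`
    obtain ⟨Y₁, hY₁, hY₁Y₀⟩ := exists_norm_eq_one_inner_eq_zero hdim Y₀
    have hY₀Y₁ : ⟪Y₀, Y₁⟫ = 0 := by rwa [real_inner_comm]
    set a := ⟪Y₁, η⟫ / ξ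
    obtain ⟨c, σ, hc, hσ, hcσ, hσa⟩ := exists_sq_add_sq_eq_one_abs_mul_lt hε a
    refine ⟨vecCons 0 ⇑Y₀, vecCons (-(σ * a)) ⇑(σ • Y₁), c, by simp [hY₀Y₁], by simp [hY₀0],
      ne_of_gt (by simp [hY₁]; nlinarith [mul_self_nonneg (σ * a), mul_self_pos.2 hσ]), hc, hP,
      ⟨-(σ * a), c • Y₀ + σ • Y₁, norm_smul_add_smul_eq_one hY₀ hY₁ hY₀Y₁ hcσ,
        by rwa [abs_neg], ?_, by simp⟩,
      ⟨σ * a, c • Y₀ + (-σ) • Y₁, norm_smul_add_smul_eq_one hY₀ hY₁ hY₀Y₁ (by linarith), hσa, ?_,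
        by simp [sub_eq_add_neg]⟩⟩ <;>
    · simp only [inner_add_left, real_inner_smul_left, hY₀η, a]
      field_simp
      ring

end Admissible

theorem transverse_fiber_infinity_kernel_general
    (m : ℕ) (hm : 2 ≤ m) (ξ : ℝ) (η : EuclideanSpace ℝ (Fin m))
    (ε : ℝ) (hε : 0 < ε)
    (f : Matrix (Fin (m + 1)) (Fin (m + 1)) ℝ) (hsymm : f.IsSymm)
    (h : ∀ Y : EuclideanSpace ℝ (Fin m), ‖Y‖ = 1 → ∀ s : ℝ, |s| < ε →
      s * ξ + ⟪Y, η⟫ = 0 →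
      (1 - Matrix.vecMulVec (Fin.cons s (fun i => Y i)) (Fin.cons 0 (fun i => Y i))) * f *
        (1 - Matrix.vecMulVec (Fin.cons s (fun i => Y i)) (Fin.cons 0 (fun i => Y i)))ᵀ = 0) :
    f = 0 := by
  have hV : ∀ w, IsAdmissibleDirection ε ξ η w → VanishesOnOrthogonal f w := by
    rintro _ ⟨s, Y, hY, hs, hsY, rfl⟩
    exact vanishesOnOrthogonal_of_mul_mul_transpose_eq_zero (h Y hY s hs hsY)
  obtain ⟨P, Q, c, hPQ, hP, hQ, hc, h₁, h₂, h₃⟩ := exists_admissible_frame hm hε ξ η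
  exact eq_zero_of_vanishesOnOrthogonal_of_mulVec_eq_zero hsymm hP (hV P h₁)
    (mulVec_eq_zero_of_vanishesOnOrthogonal_frame hsymm hPQ hP hQ hc (hV P h₁) (hV _ h₂) (hV _ h₃))

/-- **Ellipticity at fiber infinity for the transverse ray transform of 2-tensors
(kernel statement).**  With `n = m + 1 ≥ 3`, identify `ℝⁿ = ℝ × ℝ^m`.  If a real symmetric
`n × n` matrix `f` satisfies `P f Pᵀ = 0` for `P = Id − w vᵀ`, `w = (s, Y)`, `v = (0, Y)`,
for every unit vector `Y ∈ ℝ^m` and every small `s` with `s ξ + ⟨Y, η⟩ = 0`, then `f = 0`. -/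
theorem transverse_fiber_infinity_kernel
    (m : ℕ) (hm : 2 ≤ m) (ξ : ℝ) (η : EuclideanSpace ℝ (Fin m))
    (hξη : ¬ (ξ = 0 ∧ η = 0)) (ε : ℝ) (hε : 0 < ε)
    (f : Matrix (Fin (m + 1)) (Fin (m + 1)) ℝ) (hsymm : f.IsSymm)
    (h : ∀ Y : EuclideanSpace ℝ (Fin m), ‖Y‖ = 1 → ∀ s : ℝ, |s| < ε →
      s * ξ + ⟪Y, η⟫ = 0 →
      (1 - Matrix.vecMulVec (Fin.cons s (fun i => Y i)) (Fin.cons 0 (fun i => Y i))) * f *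
        (1 - Matrix.vecMulVec (Fin.cons s (fun i => Y i)) (Fin.cons 0 (fun i => Y i)))ᵀ = 0) :
    f = 0 :=
  transverse_fiber_infinity_kernel_general m hm ξ η ε hε f hsymm h
end

section
/- Let n ≥ 3 and identify ℂⁿ with ℂ × ℂ^(n−1), writing vectors as (z₀, z′). Let ξ ∈ ℝ and η ∈ ℝ^(n−1), and let i denote the imaginary unit. Let f be a complex symmetric n × n matrix (fᵀ = f). Suppose that for every unit vector Y ∈ ℝ^(n−1), setting c = (ξ − i)·⟨Y, η⟩/(ξ² + 1) ∈ ℂ, w = (−c, Y) ∈ ℂⁿ, v = (0, Y) ∈ ℂⁿ, and P = Idₙ − w vᵀ, one has P f Pᵀ = 0. Then f = 0. -/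
/-!
If `u ⬝ᵥ w = 0` then `uᵀ P = uᵀ`, so `P f Pᵀ = 0` forces the bilinear form `uᵀ f u'` to vanish on
the (bilinear, not Hermitian) orthogonal complement of `w = (-c, Y)`. For `Y = e_k` this
complement contains `e_l` (`l ≠ k`), which kills the spatial diagonal; for `Y` a unit vector in
the plane of `e_k, e_l` it contains `Y_l e_k - Y_k e_l`, which then kills `f_kl + f_lk = 2 f_kl`.
Once the spatial block vanishes, `e₀ + c e_k ⊥ w` for `Y = e_k` kills `f_0l` and `f_00`.
-/

open scoped RealInnerProductSpace Matrix

theorem EuclideanSpace.norm_single_add_single_eq_one {m : ℕ} {k l : Fin m} (hkl : k ≠ l)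
    {a b : ℝ} (hab : a ^ 2 + b ^ 2 = 1) :
    ‖EuclideanSpace.single k a + EuclideanSpace.single l b‖ = 1 := by
  have h := norm_add_sq_eq_norm_sq_add_norm_sq_real
    (x := EuclideanSpace.single k a) (y := EuclideanSpace.single l b)
    (by simp [EuclideanSpace.inner_single_left, hkl])
  rw [PiLp.norm_single, PiLp.norm_single, Real.norm_eq_abs, Real.norm_eq_abs, abs_mul_abs_self,
    abs_mul_abs_self] at h
  rw [← pow_eq_one_iff_of_nonneg (norm_nonneg _) two_ne_zero, sq, h, ← hab]
  ring

namespace Matrix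

variable {n R : Type*} [Fintype n] [CommRing R]

def VanishesOnOrth (f : Matrix n n R) (w : n → R) : Prop :=
  ∀ u u' : n → R, u ⬝ᵥ w = 0 → u' ⬝ᵥ w = 0 → u ⬝ᵥ f *ᵥ u' = 0

theorem vecMul_one_sub_vecMulVec_of_dotProduct_eq_zero [DecidableEq n] {w v u : n → R}
    (hu : u ⬝ᵥ w = 0) : u ᵥ* (1 - vecMulVec w v) = u := by
  rw [vecMul_sub, vecMul_one, vecMul_vecMulVec, hu, zero_smul, sub_zero]

theorem vanishesOnOrth_of_conj_eq_zero [DecidableEq n] {f : Matrix n n R} {w v : n → R}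
    (h : (1 - vecMulVec w v) * f * (1 - vecMulVec w v)ᵀ = 0) : VanishesOnOrth f w := by
  intro u u' hu hu'
  set P := 1 - vecMulVec w v
  calc u ⬝ᵥ f *ᵥ u' = u ᵥ* P ⬝ᵥ f *ᵥ (Pᵀ *ᵥ u') := by
        rw [mulVec_transpose, vecMul_one_sub_vecMulVec_of_dotProduct_eq_zero hu,
          vecMul_one_sub_vecMulVec_of_dotProduct_eq_zero hu']
    _ = u ⬝ᵥ (P * f * Pᵀ) *ᵥ u' := by
        rw [← dotProduct_mulVec, mulVec_mulVec, mulVec_mulVec, Matrix.mul_assoc]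
    _ = 0 := by rw [h, zero_mulVec, dotProduct_zero]

namespace VanishesOnOrth

variable {m : ℕ} {f : Matrix (Fin (m + 1)) (Fin (m + 1)) R} {z : R} {y : Fin m → R}

theorem quadratic_succ_succ (h : VanishesOnOrth f (Fin.cons z y)) (k l : Fin m) :
    y l ^ 2 * f k.succ k.succ - y k * y l * (f k.succ l.succ + f l.succ k.succ)
      + y k ^ 2 * f l.succ l.succ = 0 := by
  have hu : (y l • Pi.single k.succ 1 - y k • Pi.single l.succ 1 : Fin (m + 1) → R)
      ⬝ᵥ Fin.cons z y = 0 := by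
    simp [sub_dotProduct, mul_comm]
  have := h _ _ hu hu
  simp only [mulVec_sub, mulVec_smul, mulVec_single, MulOpposite.op_one, one_smul, dotProduct_sub,
    dotProduct_smul, sub_dotProduct, smul_dotProduct, single_dotProduct, col_apply, one_mul,
    smul_eq_mul] at this
  linear_combination this

theorem apply_zero_succ (h : VanishesOnOrth f (Fin.cons z y)) {k l : Fin m} (hk : y k = 1)
    (hl : y l = 0) : f 0 l.succ = z * f k.succ l.succ := by
  have hu : (Pi.single 0 1 - z • Pi.single k.succ 1 : Fin (m + 1) → R) ⬝ᵥ Fin.cons z y = 0 := by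
    simp [sub_dotProduct, hk]
  have hu' : (Pi.single l.succ 1 : Fin (m + 1) → R) ⬝ᵥ Fin.cons z y = 0 := by
    simp [hl]
  have := h _ _ hu hu'
  simp only [mulVec_single, MulOpposite.op_one, one_smul, sub_dotProduct, single_dotProduct,
    col_apply, one_mul, smul_dotProduct, smul_eq_mul] at this
  linear_combination this

theorem apply_zero_zero (h : VanishesOnOrth f (Fin.cons z y)) {k : Fin m} (hk : y k = 1) :
    f 0 0 - z * (f 0 k.succ + f k.succ 0) + z ^ 2 * f k.succ k.succ = 0 := by
  have hu : (Pi.single 0 1 - z • Pi.single k.succ 1 : Fin (m + 1) → R) ⬝ᵥ Fin.cons z y = 0 := by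
    simp [sub_dotProduct, hk]
  have := h _ _ hu hu
  simp only [mulVec_sub, mulVec_single, MulOpposite.op_one, one_smul, mulVec_smul, dotProduct_sub,
    sub_dotProduct, single_dotProduct, col_apply, one_mul, smul_dotProduct, smul_eq_mul,
    dotProduct_smul] at this
  linear_combination this

end VanishesOnOrth

theorem eq_zero_of_forall_vanishesOnOrth_cons {m : ℕ} (hm : 2 ≤ m)
    {f : Matrix (Fin (m + 1)) (Fin (m + 1)) ℂ} (hsymm : f.IsSymm)
    (c : EuclideanSpace ℝ (Fin m) → ℂ)
    (h : ∀ Y : EuclideanSpace ℝ (Fin m), ‖Y‖ = 1 →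
      VanishesOnOrth f (Fin.cons (c Y) fun i => (Y i : ℂ))) :
    f = 0 := by
  have : Nontrivial (Fin m) := Fin.nontrivial_iff_two_le.mpr hm
  have he : ∀ k : Fin m, ‖EuclideanSpace.single k (1 : ℝ)‖ = 1 := by simp
  have hdiag : ∀ l : Fin m, f l.succ l.succ = 0 := by
    intro l
    obtain ⟨k, hkl⟩ := exists_ne l
    simpa [hkl] using (h _ (he k)).quadratic_succ_succ k l
  have hspatial : ∀ k l : Fin m, f k.succ l.succ = 0 := by
    intro k l
    rcases eq_or_ne k l with rfl | hkl
    · exact hdiag k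
    -- a Pythagorean unit vector, to avoid `√2`
    have hY := EuclideanSpace.norm_single_add_single_eq_one hkl (a := 3 / 5) (b := 4 / 5)
      (by norm_num)
    simpa [hkl, hkl.symm, hdiag, hsymm.apply k.succ l.succ] using
      (h _ hY).quadratic_succ_succ k l
  have hrow : ∀ l : Fin m, f 0 l.succ = 0 := by
    intro l
    obtain ⟨k, hkl⟩ := exists_ne l
    simpa [hkl.symm, hspatial] using (h _ (he k)).apply_zero_succ (k := k) (l := l)
  have hcorner : f 0 0 = 0 := by
    obtain ⟨k⟩ : Nonempty (Fin m) := inferInstance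
    simpa [hrow, hspatial, (hsymm.apply _ _).trans (hrow k)] using
      (h _ (he k)).apply_zero_zero (k := k)
  ext i j
  cases i using Fin.cases <;> cases j using Fin.cases
  · exact hcorner
  · exact hrow _
  · exact (hsymm.apply _ _).trans (hrow _)
  · exact hspatial _ _

end Matrix

/-- **Ellipticity at base infinity for the transverse ray transform of 2-tensors
(kernel statement).**  With `n = m + 1 ≥ 3`, identify `ℂⁿ = ℂ × ℂ^m`.  If a complex symmetric
`n × n` matrix `f` satisfies `P f Pᵀ = 0` for `P = Id − w vᵀ`, `w = (−c, Y)`, `v = (0, Y)`,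
`c = (ξ − i)⟨Y, η⟩/(ξ² + 1)`, for every unit vector `Y ∈ ℝ^m`, then `f = 0`. -/
theorem transverse_base_infinity_kernel
    (m : ℕ) (hm : 2 ≤ m) (ξ : ℝ) (η : EuclideanSpace ℝ (Fin m))
    (f : Matrix (Fin (m + 1)) (Fin (m + 1)) ℂ) (hsymm : f.IsSymm)
    (h : ∀ Y : EuclideanSpace ℝ (Fin m), ‖Y‖ = 1 →
      let c : ℂ := ((ξ : ℂ) - Complex.I) * ((⟪Y, η⟫ : ℝ) : ℂ) / (((ξ ^ 2 + 1 : ℝ) : ℂ))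
      let w : Fin (m + 1) → ℂ := Fin.cons (-c) (fun i => ((Y i : ℝ) : ℂ))
      let v : Fin (m + 1) → ℂ := Fin.cons 0 (fun i => ((Y i : ℝ) : ℂ))
      let P : Matrix (Fin (m + 1)) (Fin (m + 1)) ℂ := 1 - Matrix.vecMulVec w v
      P * f * Pᵀ = 0) :
    f = 0 :=
  Matrix.eq_zero_of_forall_vanishesOnOrth_cons hm hsymm _ fun Y hY =>
    Matrix.vanishesOnOrth_of_conj_eq_zero (h Y hY)
end

section
/- Let n ≥ 3, let ξ ∈ ℝ with ξ ≠ 0 and η ∈ ℝ^(n−1), and let χ : ℝ → ℝ be continuous, even, nonnegative, compactly supported, with χ(0) > 0. For a unit vector Y ∈ ℝ^(n−1) set s(Y) = −⟨Y, η⟩/ξ, w(Y) = (s(Y), Y) ∈ ℝⁿ, v(Y) = (0, Y) ∈ ℝⁿ, and P(Y) = Idₙ − w(Y) v(Y)ᵀ. Then for every nonzero real symmetric n × n matrix f, ∫_{S^(n−2)} χ(s(Y)) ‖P(Y) f P(Y)ᵀ‖²_F dσ(Y) > 0, where σ is the surface measure on the unit sphere S^(n−2) ⊂ ℝ^(n−1)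 and ‖·‖_F is the Frobenius norm. -/
/-!
Write `q(x) = xᵀ f x` and `P = 1 - w vᵀ`. Since `Pᵀ x = x - (w ⬝ᵥ x) v`, expanding `q(Pᵀ x) = 0`
shows that `P f Pᵀ = 0` forces `q(x) = (w ⬝ᵥ x) (c ⬝ᵥ x)` for some `c`. If this holds for three
pairwise non-proportional `w₁, w₂, w₃`, then `(w₁ ⬝ᵥ x) (c₁ ⬝ᵥ x)` vanishes on the hyperplanes
`w₂ ⬝ᵥ x = 0` and `w₃ ⬝ᵥ x = 0`, so `c₁` vanishes on both and hence everywhere: `q = 0`, and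
`f = 0` by polarization. Rotating a unit vector `u ⊥ η` through small angles gives unit vectors `Y`
with `χ(s(Y)) > 0` and pairwise non-proportional `w(Y)`. So the continuous nonnegative integrand is
positive somewhere, and the surface measure charges every nonempty open subset of the sphere.
-/

open scoped RealInnerProductSpace Matrix
open MeasureTheory

namespace Matrix

lemma sum_sum_sq_eq_zero_iff {ι κ R : Type*} [Fintype ι] [Fintype κ] [Ring R] [LinearOrder R]
    [IsStrictOrderedRing R] {M : Matrix ι κ R} : ∑ i, ∑ j, M i j ^ 2 = 0 ↔ M = 0 := by
  simp [Fintype.sum_eq_zero_iff_of_nonneg, Finset.sum_nonneg, sq_nonneg, Pi.le_def, funext_iff,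
    ← Matrix.ext_iff]

variable {ι K : Type*} [Fintype ι]

section CommRing

variable [CommRing K]

lemma transpose_one_sub_vecMulVec_mulVec [DecidableEq ι] (w v x : ι → K) :
    (1 - vecMulVec w v)ᵀ *ᵥ x = x - (w ⬝ᵥ x) • v := by
  rw [transpose_sub, transpose_one, transpose_vecMulVec, sub_mulVec, one_mulVec,
    vecMulVec_mulVec, op_smul_eq_smul]

lemma IsSymm.dotProduct_mulVec_comm_s4 {f : Matrix ι ι K} (hf : f.IsSymm) (x y : ι → K) :
    x ⬝ᵥ f *ᵥ y = y ⬝ᵥ f *ᵥ x := by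
  rw [dotProduct_mulVec, ← mulVec_transpose, hf.eq, dotProduct_comm]

lemma IsSymm.exists_dotProduct_mulVec_self_eq_mul [DecidableEq ι] {f : Matrix ι ι K}
    (hf : f.IsSymm) {w v : ι → K} (h : (1 - vecMulVec w v) * f * (1 - vecMulVec w v)ᵀ = 0) :
    ∃ c : ι → K, ∀ x, x ⬝ᵥ f *ᵥ x = (w ⬝ᵥ x) * (c ⬝ᵥ x) := by
  refine ⟨2 • f *ᵥ v - (v ⬝ᵥ f *ᵥ v) • w, fun x => ?_⟩
  have h0 : ((1 - vecMulVec w v)ᵀ *ᵥ x) ⬝ᵥ f *ᵥ ((1 - vecMulVec w v)ᵀ *ᵥ x) = 0 :=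
    calc _ = x ⬝ᵥ ((1 - vecMulVec w v) * f * (1 - vecMulVec w v)ᵀ) *ᵥ x := by
          rw [← mulVec_mulVec, ← mulVec_mulVec, dotProduct_mulVec x, mulVec_transpose]
      _ = 0 := by rw [h, zero_mulVec, dotProduct_zero]
  rw [transpose_one_sub_vecMulVec_mulVec] at h0
  simp only [mulVec_sub, mulVec_smul, sub_dotProduct, dotProduct_sub, smul_dotProduct,
    dotProduct_smul, smul_eq_mul, hf.dotProduct_mulVec_comm_s4 v x] at h0 ⊢
  rw [dotProduct_comm (f *ᵥ v) x, dotProduct_comm w x] at *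
  linear_combination h0

end CommRing

section Field

variable [Field K]

lemma dotProduct_eq_zero_of_ker_of_ker {b b' c x₀ : ι → K} (hb'x₀ : b' ⬝ᵥ x₀ = 0)
    (hbx₀ : b ⬝ᵥ x₀ ≠ 0) (h : ∀ x, b ⬝ᵥ x = 0 → c ⬝ᵥ x = 0)
    (h' : ∀ x, b' ⬝ᵥ x = 0 → c ⬝ᵥ x = 0) (x : ι → K) : c ⬝ᵥ x = 0 := by
  set α := b ⬝ᵥ x / b ⬝ᵥ x₀
  have hx : x = (x - α • x₀) + α • x₀ := by abel
  have h₁ : b ⬝ᵥ (x - α • x₀) = 0 := by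
    rw [dotProduct_sub, dotProduct_smul, smul_eq_mul, div_mul_cancel₀ _ hbx₀, sub_self]
  have h₂ : b' ⬝ᵥ α • x₀ = 0 := by rw [dotProduct_smul, hb'x₀, smul_zero]
  rw [hx, dotProduct_add, h _ h₁, h' _ h₂, add_zero]

variable [NeZero (2 : K)]

/-- On the line `x + t x₀` the product is `(A + tB)(C + tD)` with `B ≠ 0`; its values at
`t = 0, ±1` force `C = 0`. -/
lemma dotProduct_eq_zero_of_mul_eq_zero_on_ker {a b c x₀ : ι → K}
    (hbx₀ : b ⬝ᵥ x₀ = 0) (hax₀ : a ⬝ᵥ x₀ ≠ 0)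
    (h : ∀ x, b ⬝ᵥ x = 0 → (a ⬝ᵥ x) * (c ⬝ᵥ x) = 0) {x : ι → K} (hx : b ⬝ᵥ x = 0) :
    c ⬝ᵥ x = 0 := by
  have hline : ∀ t : K, (a ⬝ᵥ x + t * a ⬝ᵥ x₀) * (c ⬝ᵥ x + t * c ⬝ᵥ x₀) = 0 := fun t => by
    simpa only [dotProduct_add, dotProduct_smul, smul_eq_mul] using
      h (x + t • x₀) (by rw [dotProduct_add, dotProduct_smul, hx, hbx₀, smul_zero, add_zero])
  by_contra hcx
  have hax : a ⬝ᵥ x = 0 := (mul_eq_zero.1 (by simpa using hline 0)).resolve_right hcx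
  have hplus := (mul_eq_zero.1 (hline 1)).resolve_left (by simpa [hax] using hax₀)
  have hminus := (mul_eq_zero.1 (hline (-1))).resolve_left (by simpa [hax] using hax₀)
  apply hcx
  have : (2 : K) * c ⬝ᵥ x = 0 := by linear_combination hplus + hminus
  exact (mul_eq_zero.1 this).resolve_left two_ne_zero

lemma IsSymm.eq_zero_of_dotProduct_mulVec_self [DecidableEq ι] {f : Matrix ι ι K}
    (hf : f.IsSymm) (h : ∀ x, x ⬝ᵥ f *ᵥ x = 0) : f = 0 := by
  have : toBilin' f = 0 :=
    LinearMap.BilinForm.ext_of_isSymm (isSymm_toBilin'_iff_isSymm.2 hf)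
      LinearMap.BilinForm.isSymm_zero fun x => by
        rw [toBilin'_apply', h x, LinearMap.zero_apply, LinearMap.zero_apply]
  simpa using this

theorem IsSymm.eq_zero_of_conj_one_sub_vecMulVec_eq_zero [DecidableEq ι] {f : Matrix ι ι K}
    (hf : f.IsSymm) {w₁ w₂ w₃ v₁ v₂ v₃ x₂ x₃ : ι → K}
    (h₁ : (1 - vecMulVec w₁ v₁) * f * (1 - vecMulVec w₁ v₁)ᵀ = 0)
    (h₂ : (1 - vecMulVec w₂ v₂) * f * (1 - vecMulVec w₂ v₂)ᵀ = 0)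
    (h₃ : (1 - vecMulVec w₃ v₃) * f * (1 - vecMulVec w₃ v₃)ᵀ = 0)
    (hw₂x₂ : w₂ ⬝ᵥ x₂ = 0) (hw₁x₂ : w₁ ⬝ᵥ x₂ ≠ 0)
    (hw₃x₃ : w₃ ⬝ᵥ x₃ = 0) (hw₁x₃ : w₁ ⬝ᵥ x₃ ≠ 0) (hw₂x₃ : w₂ ⬝ᵥ x₃ ≠ 0) : f = 0 := by
  obtain ⟨c, hc⟩ := hf.exists_dotProduct_mulVec_self_eq_mul h₁
  have hker : ∀ {w v : ι → K}, (1 - vecMulVec w v) * f * (1 - vecMulVec w v)ᵀ = 0 →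
      ∀ x, w ⬝ᵥ x = 0 → (w₁ ⬝ᵥ x) * (c ⬝ᵥ x) = 0 := fun h x hx => by
    obtain ⟨c', hc'⟩ := hf.exists_dotProduct_mulVec_self_eq_mul h
    rw [← hc, hc', hx, zero_mul]
  have hc₂ : ∀ x, w₂ ⬝ᵥ x = 0 → c ⬝ᵥ x = 0 := fun _ =>
    dotProduct_eq_zero_of_mul_eq_zero_on_ker hw₂x₂ hw₁x₂ (hker h₂)
  have hc₃ : ∀ x, w₃ ⬝ᵥ x = 0 → c ⬝ᵥ x = 0 := fun _ =>
    dotProduct_eq_zero_of_mul_eq_zero_on_ker hw₃x₃ hw₁x₃ (hker h₃)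
  refine hf.eq_zero_of_dotProduct_mulVec_self fun x => ?_
  rw [hc, dotProduct_eq_zero_of_ker_of_ker hw₃x₃ hw₂x₃ hc₂ hc₃, mul_zero]

end Field

end Matrix

section Rotation

variable {E : Type*} [NormedAddCommGroup E] [InnerProductSpace ℝ E]

lemma exists_norm_eq_one_inner_eq_zero_s4 [FiniteDimensional ℝ E] (h : 2 ≤ Module.finrank ℝ E)
    (a : E) : ∃ u : E, ‖u‖ = 1 ∧ ⟪u, a⟫ = 0 := by
  have hrank : 0 < Module.finrank ℝ (ℝ ∙ a)ᗮ := by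
    have := (ℝ ∙ a).finrank_add_finrank_orthogonal
    have := finrank_span_le_card (R := ℝ) ({a} : Set E)
    simp only [Set.toFinset_singleton, Finset.card_singleton] at this
    omega
  have : Nontrivial (ℝ ∙ a)ᗮ := Module.finrank_pos_iff.1 hrank
  obtain ⟨u, hu⟩ := exists_norm_eq (ℝ ∙ a)ᗮ zero_le_one
  exact ⟨u, hu, Submodule.mem_orthogonal_singleton_iff_inner_left.1 u.2⟩

lemma inner_cos_smul_add_sin_smul {u e : E} (hu : ‖u‖ = 1) (he : ‖e‖ = 1) (hue : ⟪u, e⟫ = 0)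
    (s t : ℝ) :
    ⟪Real.cos s • u + Real.sin s • e, Real.cos t • u + Real.sin t • e⟫ = Real.cos (s - t) := by
  simp only [inner_add_left, inner_add_right, real_inner_smul_left, real_inner_smul_right,
    real_inner_self_eq_norm_sq, hu, he, hue, real_inner_comm u e, Real.cos_sub]
  ring

lemma norm_cos_smul_add_sin_smul {u e : E} (hu : ‖u‖ = 1) (he : ‖e‖ = 1) (hue : ⟪u, e⟫ = 0)
    (t : ℝ) : ‖Real.cos t • u + Real.sin t • e‖ = 1 := by
  have := inner_cos_smul_add_sin_smul hu he hue t t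
  rwa [sub_self, Real.cos_zero, real_inner_self_eq_norm_sq,
    pow_eq_one_iff_of_nonneg (norm_nonneg _) two_ne_zero] at this

end Rotation

section Transverse

open Matrix Real Filter Topology

variable {m : ℕ} (ξ : ℝ) (η : EuclideanSpace ℝ (Fin m))

noncomputable def transverseW (Y : EuclideanSpace ℝ (Fin m)) : Fin (m + 1) → ℝ :=
  Fin.cons (-⟪Y, η⟫ / ξ) (fun i => Y i)

def transverseV (Y : EuclideanSpace ℝ (Fin m)) : Fin (m + 1) → ℝ :=
  Fin.cons 0 (fun i => Y i)

noncomputable def transverseProj (Y : EuclideanSpace ℝ (Fin m)) :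
    Matrix (Fin (m + 1)) (Fin (m + 1)) ℝ :=
  1 - vecMulVec (transverseW ξ η Y) (transverseV Y)

noncomputable def transverseIntegrand (χ : ℝ → ℝ) (f : Matrix (Fin (m + 1)) (Fin (m + 1)) ℝ)
    (Y : EuclideanSpace ℝ (Fin m)) : ℝ :=
  χ (-⟪Y, η⟫ / ξ) * ∑ i, ∑ j, ((transverseProj ξ η Y * f * (transverseProj ξ η Y)ᵀ) i j) ^ 2

lemma transverseW_dotProduct_transverseV (Y Z : EuclideanSpace ℝ (Fin m)) :
    transverseW ξ η Y ⬝ᵥ transverseV Z = ⟪Y, Z⟫ := by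
  change vecCons _ _ ⬝ᵥ vecCons _ _ = _
  rw [cons_dotProduct_cons, mul_zero, zero_add, EuclideanSpace.inner_eq_star_dotProduct,
    star_trivial, dotProduct_comm]

lemma continuous_transverseProj : Continuous (transverseProj ξ η) := by
  have hcoord : Continuous fun Y : EuclideanSpace ℝ (Fin m) => (fun i => Y i : Fin m → ℝ) :=
    PiLp.continuous_ofLp 2 _
  have hW : Continuous (transverseW ξ η) :=
    (by fun_prop : Continuous fun Y : EuclideanSpace ℝ (Fin m) => -⟪Y, η⟫ / ξ).finCons hcoord
  have hV : Continuous (transverseV (m := m)) := continuous_const.finCons hcoord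
  exact continuous_const.sub (hW.matrix_vecMulVec hV)

lemma continuous_transverseIntegrand {χ : ℝ → ℝ} (hχ : Continuous χ)
    (f : Matrix (Fin (m + 1)) (Fin (m + 1)) ℝ) : Continuous (transverseIntegrand ξ η χ f) := by
  have := continuous_transverseProj ξ η
  unfold transverseIntegrand
  fun_prop

variable {ξ η}

/-- The three `w`'s come from rotating a unit vector `u ⊥ η` by `0, ±δ`, the vectors witnessing
their non-proportionality from rotating further by `-π/2`. -/
theorem eq_zero_of_forall_transverseProj_conj_eq_zero (hm : 2 ≤ m)
    {f : Matrix (Fin (m + 1)) (Fin (m + 1)) ℝ} (hf : f.IsSymm)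
    {U : Set (EuclideanSpace ℝ (Fin m))} (hU : IsOpen U) (hηU : ∀ Y, ⟪Y, η⟫ = 0 → Y ∈ U)
    (h : ∀ Y ∈ Metric.sphere 0 1, Y ∈ U →
      transverseProj ξ η Y * f * (transverseProj ξ η Y)ᵀ = 0) :
    f = 0 := by
  obtain ⟨u, hu, huη⟩ := exists_norm_eq_one_inner_eq_zero_s4 (by simpa using hm) η
  obtain ⟨e, he, heu⟩ := exists_norm_eq_one_inner_eq_zero_s4 (by simpa using hm) u
  have hue : ⟪u, e⟫ = 0 := by rw [real_inner_comm, heu]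
  set Y : ℝ → EuclideanSpace ℝ (Fin m) := fun t => cos t • u + sin t • e
  have hwv : ∀ s t, transverseW ξ η (Y s) ⬝ᵥ transverseV (Y t) = cos (s - t) := fun s t => by
    rw [transverseW_dotProduct_transverseV, inner_cos_smul_add_sin_smul hu he hue]
  have hY : ∀ t, Y t ∈ U → transverseProj ξ η (Y t) * f * (transverseProj ξ η (Y t))ᵀ = 0 :=
    fun t => h (Y t) (mem_sphere_zero_iff_norm.2 (norm_cos_smul_add_sin_smul hu he hue t))
  have hY0 : Y 0 ∈ U := hηU _ (by simpa [Y] using huη)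
  have hnear : ∀ᶠ t in 𝓝 0, Y t ∈ U :=
    (by fun_prop : Continuous Y).continuousAt.preimage_mem_nhds (hU.mem_nhds hY0)
  obtain ⟨δ, ⟨hδU, hδU'⟩, hδ, hδπ⟩ : ∃ δ, (Y δ ∈ U ∧ Y (-δ) ∈ U) ∧ δ ∈ Set.Ioo 0 (π / 4) :=
    (((hnear.and ((continuous_neg.tendsto' 0 0 neg_zero).eventually hnear)).filter_mono
      nhdsWithin_le_nhds).and (Ioo_mem_nhdsGT (by positivity))).exists
  have hsin : ∀ t, 0 < t → t < π → sin t ≠ 0 := fun t h0 hπ => (sin_pos_of_pos_of_lt_pi h0 hπ).ne'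
  refine hf.eq_zero_of_conj_one_sub_vecMulVec_eq_zero (hY 0 hY0) (hY δ hδU) (hY (-δ) hδU')
    (x₂ := transverseV (Y (δ - π / 2))) (x₃ := transverseV (Y (-δ - π / 2)))
    ?_ ?_ ?_ ?_ ?_ <;> rw [hwv]
  · rw [sub_sub_cancel, cos_pi_div_two]
  · rw [zero_sub, neg_sub, cos_pi_div_two_sub]
    exact hsin δ hδ (by linarith)
  · rw [sub_sub_cancel, cos_pi_div_two]
  · rw [zero_sub, neg_sub, sub_neg_eq_add, add_comm, cos_add_pi_div_two, neg_ne_zero]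
    exact hsin δ hδ (by linarith)
  · rw [show δ - (-δ - π / 2) = 2 * δ + π / 2 by ring, cos_add_pi_div_two, neg_ne_zero]
    exact hsin (2 * δ) (by linarith) (by linarith)

end Transverse

theorem transverse_fiber_infinity_elliptic_general
    (m : ℕ) (hm : 2 ≤ m) (ξ : ℝ) (η : EuclideanSpace ℝ (Fin m))
    (χ : ℝ → ℝ) (hχcont : Continuous χ)
    (hχnonneg : ∀ s, 0 ≤ χ s) (hχ0 : 0 < χ 0)
    (f : Matrix (Fin (m + 1)) (Fin (m + 1)) ℝ) (hsymm : f.IsSymm) (hf : f ≠ 0) :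
    0 < ∫ Y : Metric.sphere (0 : EuclideanSpace ℝ (Fin m)) 1,
        (let s : ℝ := -⟪(Y : EuclideanSpace ℝ (Fin m)), η⟫ / ξ
         let w : Fin (m + 1) → ℝ := Fin.cons s (fun i => (Y : EuclideanSpace ℝ (Fin m)) i)
         let v : Fin (m + 1) → ℝ := Fin.cons 0 (fun i => (Y : EuclideanSpace ℝ (Fin m)) i)
         let P : Matrix (Fin (m + 1)) (Fin (m + 1)) ℝ := 1 - Matrix.vecMulVec w v
         χ s * ∑ i, ∑ j, ((P * f * Pᵀ) i j) ^ 2)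
      ∂((volume : Measure (EuclideanSpace ℝ (Fin m))).toSphere) := by
  change 0 < ∫ Y : Metric.sphere (0 : EuclideanSpace ℝ (Fin m)) 1,
    transverseIntegrand ξ η χ f Y ∂((volume : Measure (EuclideanSpace ℝ (Fin m))).toSphere)
  obtain ⟨Y, hY⟩ : ∃ Y : Metric.sphere (0 : EuclideanSpace ℝ (Fin m)) 1,
      transverseIntegrand ξ η χ f Y ≠ 0 := by
    by_contra! hzero
    refine hf (eq_zero_of_forall_transverseProj_conj_eq_zero (ξ := ξ) hm hsymm
      (U := {Y | 0 < χ (-⟪Y, η⟫ / ξ)}) (isOpen_lt continuous_const (by fun_prop))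
      (fun Y hY => by rwa [Set.mem_ofPred_eq, hY, neg_zero, zero_div]) fun Y hY hYU => ?_)
    exact Matrix.sum_sum_sq_eq_zero_iff.1 ((mul_eq_zero.1 (hzero ⟨Y, hY⟩)).resolve_left hYU.ne')
  exact ((continuous_transverseIntegrand ξ η hχcont f).comp continuous_subtype_val
    ).integral_pos_of_hasCompactSupport_nonneg_nonzero (.of_compactSpace _)
    (fun Y => mul_nonneg (hχnonneg _) (by positivity)) hY

/-- **Ellipticity at fiber infinity for the transverse ray transform of 2-tensors.**
With `n = m + 1 ≥ 3`, for `ξ ≠ 0`, `η ∈ ℝ^m`, and a continuous, even, nonnegative,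
compactly supported cutoff `χ` with `χ(0) > 0`, the quadratic form
`f ↦ ∫_{S^{m−1}} χ(s(Y)) ‖P(Y) f P(Y)ᵀ‖²_F dσ(Y)` is strictly positive on nonzero real
symmetric `n × n` matrices, where `s(Y) = −⟨Y, η⟩/ξ`, `P(Y) = Id − w(Y) v(Y)ᵀ`,
`w(Y) = (s(Y), Y)`, `v(Y) = (0, Y)`, and `σ` is the surface measure on the unit sphere. -/
theorem transverse_fiber_infinity_elliptic
    (m : ℕ) (hm : 2 ≤ m) (ξ : ℝ) (hξ : ξ ≠ 0) (η : EuclideanSpace ℝ (Fin m))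
    (χ : ℝ → ℝ) (hχcont : Continuous χ) (hχeven : ∀ s, χ (-s) = χ s)
    (hχnonneg : ∀ s, 0 ≤ χ s) (hχsupp : HasCompactSupport χ) (hχ0 : 0 < χ 0)
    (f : Matrix (Fin (m + 1)) (Fin (m + 1)) ℝ) (hsymm : f.IsSymm) (hf : f ≠ 0) :
    0 < ∫ Y : Metric.sphere (0 : EuclideanSpace ℝ (Fin m)) 1,
        (let s : ℝ := -⟪(Y : EuclideanSpace ℝ (Fin m)), η⟫ / ξ
         let w : Fin (m + 1) → ℝ := Fin.cons s (fun i => (Y : EuclideanSpace ℝ (Fin m)) i)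
         let v : Fin (m + 1) → ℝ := Fin.cons 0 (fun i => (Y : EuclideanSpace ℝ (Fin m)) i)
         let P : Matrix (Fin (m + 1)) (Fin (m + 1)) ℝ := 1 - Matrix.vecMulVec w v
         χ s * ∑ i, ∑ j, ((P * f * Pᵀ) i j) ^ 2)
      ∂((volume : Measure (EuclideanSpace ℝ (Fin m))).toSphere) :=
  transverse_fiber_infinity_elliptic_general m hm ξ η χ hχcont hχnonneg hχ0 f hsymm hf
end
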